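/- Let f : ℝ → ℝ be three times differentiable on (0,∞) with f'(u) ≠ 0 and f''(u) ≠ 0 for all u > 0, and set B(u) = (1/(2f''(u)))·((f'(u) + u f''(u))/(u f'(u)) − f'''(u)/f''(u)). Suppose there exist λ, μ ∈ ℝ such that B(u) − 1/f'(u) = λ u and B(u) f'(u) + 1 = μ f(u) for all u > 0. Then λ ≠ 0, μ = 0, and there exists c ∈ ℝ such that f(u) = −(2/λ) ln u + c for all u > 0. -/

import Mathlib

/-!
Write `g = f'`. Eliminating `B` between the two eigenvalue equations gives `λ u g + 2 = μ f`;
differentiating, `g` solves the Euler equation `u g' = k g` with `k = μ/λ - 1` (and `λ ≠ 0`, since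
otherwise `μ f = 2` and `μ g = 0`). The Euler equation determines `g''`, so `B = 1/(k g)`, and the
first eigenvalue equation then forces `g = C/u`. Hence `k = -1`, so `μ = 0`, `C = -2/λ`, and `f` is
a logarithm.
-/

/-- The auxiliary function
`B(u) = (1/(2f''(u)))·((f'(u) + u f''(u))/(u f'(u)) − f'''(u)/f''(u))`. -/
noncomputable def Bfun (f : ℝ → ℝ) (u : ℝ) : ℝ :=
  (1 / (2 * deriv (deriv f) u)) *
    ((deriv f u + u * deriv (deriv f) u) / (u * deriv f u) -
      deriv (deriv (deriv f)) u / deriv (deriv f) u)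

open Set

theorem mul_deriv_deriv_eq_of_mul_deriv_eq {g : ℝ → ℝ} {k : ℝ}
    (hg : ∀ u ∈ Ioi (0 : ℝ), DifferentiableAt ℝ g u)
    (heuler : ∀ u ∈ Ioi (0 : ℝ), u * deriv g u = k * g u) :
    ∀ u ∈ Ioi (0 : ℝ), u * deriv (deriv g) u = (k - 1) * deriv g u := by
  have hEq : EqOn (deriv g) (fun u => k * g u / u) (Ioi 0) := fun u hu => by
    rw [eq_div_iff (ne_of_gt hu), mul_comm, heuler u hu]
  intro u hu
  have hu0 : u ≠ 0 := ne_of_gt hu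
  have hd : HasDerivAt (fun u => k * g u / u) ((k * deriv g u * u - k * g u * 1) / u ^ 2) u :=
    ((hg u hu).hasDerivAt.const_mul k).div (hasDerivAt_id u) hu0
  rw [hEq.deriv isOpen_Ioi hu, hd.deriv, ← heuler u hu]
  field_simp

theorem Bfun_eq_of_mul_deriv_deriv_eq {f : ℝ → ℝ} {k : ℝ}
    (h2 : ∀ u ∈ Ioi (0 : ℝ), deriv (deriv f) u ≠ 0)
    (heuler : ∀ u ∈ Ioi (0 : ℝ), u * deriv (deriv f) u = k * deriv f u)
    {u : ℝ} (hu : u ∈ Ioi (0 : ℝ)) :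
    Bfun f u = 1 / (k * deriv f u) := by
  have hu0 : u ≠ 0 := ne_of_gt hu
  have hkg : k * deriv f u ≠ 0 := by rw [← heuler u hu]; exact mul_ne_zero hu0 (h2 u hu)
  have hk : k ≠ 0 := left_ne_zero_of_mul hkg
  have hg : deriv f u ≠ 0 := right_ne_zero_of_mul hkg
  have hg''' : deriv (deriv (deriv f)) u = (k - 1) * deriv (deriv f) u / u := by
    rw [eq_div_iff hu0, mul_comm]
    exact mul_deriv_deriv_eq_of_mul_deriv_eq
      (fun v hv => differentiableAt_of_deriv_ne_zero (h2 v hv)) heuler u hu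
  have hg'' : deriv (deriv f) u = k * deriv f u / u := by
    rw [eq_div_iff hu0, mul_comm, heuler u hu]
  unfold Bfun
  rw [hg''', hg'']
  field_simp
  ring

theorem mul_deriv_eq_neg_of_eqOn_div {g : ℝ → ℝ} {C : ℝ}
    (hg : EqOn g (fun u => C / u) (Ioi 0)) :
    ∀ u ∈ Ioi (0 : ℝ), u * deriv g u = -g u := by
  intro u hu
  have hu0 : u ≠ 0 := ne_of_gt hu
  have hd : HasDerivAt (fun u => C / u) ((0 * u - C * 1) / u ^ 2) u :=
    (hasDerivAt_const u C).div (hasDerivAt_id u) hu0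
  rw [hg.deriv isOpen_Ioi hu, hd.deriv, hg hu]
  field_simp
  ring

theorem exists_eq_mul_log_add_of_eqOn_deriv {f : ℝ → ℝ} {C : ℝ}
    (hf : ∀ u ∈ Ioi (0 : ℝ), DifferentiableAt ℝ f u)
    (hderiv : EqOn (deriv f) (fun u => C / u) (Ioi 0)) :
    ∃ c : ℝ, ∀ u ∈ Ioi (0 : ℝ), f u = C * Real.log u + c := by
  have hlog : ∀ u ∈ Ioi (0 : ℝ), HasDerivAt (fun u => C * Real.log u) (C / u) u := fun u hu => by
    simpa [div_eq_mul_inv] using (Real.hasDerivAt_log (ne_of_gt hu)).const_mul C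
  exact isOpen_Ioi.exists_eq_add_of_deriv_eq (convex_Ioi 0).isPreconnected
    (fun u hu => (hf u hu).differentiableWithinAt)
    (fun u hu => (hlog u hu).differentiableAt.differentiableWithinAt)
    (fun u hu => by rw [hderiv hu, (hlog u hu).deriv])

theorem eqOn_lam_mul_deriv_add_two {f : ℝ → ℝ} {lam mu : ℝ}
    (h1 : ∀ u ∈ Ioi (0 : ℝ), deriv f u ≠ 0)
    (hA : ∀ u ∈ Ioi (0 : ℝ), Bfun f u - 1 / deriv f u = lam * u)
    (hB : ∀ u ∈ Ioi (0 : ℝ), Bfun f u * deriv f u + 1 = mu * f u) :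
    EqOn (fun u => lam * u * deriv f u + 2) (fun u => mu * f u) (Ioi 0) := fun u hu =>
  have hg := h1 u hu
  calc lam * u * deriv f u + 2 = (Bfun f u - 1 / deriv f u) * deriv f u + 2 := by rw [hA u hu]
    _ = Bfun f u * deriv f u + 1 := by field_simp; ring
    _ = mu * f u := hB u hu

theorem ne_zero_and_euler_of_eqOn {f : ℝ → ℝ} {lam mu : ℝ}
    (h1 : ∀ u ∈ Ioi (0 : ℝ), deriv f u ≠ 0)
    (h2 : ∀ u ∈ Ioi (0 : ℝ), deriv (deriv f) u ≠ 0)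
    (hrel : EqOn (fun u => lam * u * deriv f u + 2) (fun u => mu * f u) (Ioi 0)) :
    lam ≠ 0 ∧ ∀ u ∈ Ioi (0 : ℝ), u * deriv (deriv f) u = (mu / lam - 1) * deriv f u := by
  have h1pos : (1 : ℝ) ∈ Ioi 0 := mem_Ioi.2 one_pos
  have hdiff : ∀ u ∈ Ioi (0 : ℝ),
      lam * deriv f u + lam * u * deriv (deriv f) u = mu * deriv f u := by
    intro u hu
    have hl : HasDerivAt (fun u => lam * u * deriv f u + 2)
        (lam * 1 * deriv f u + lam * u * deriv (deriv f) u) u :=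
      (((hasDerivAt_id u).const_mul lam).mul
        (differentiableAt_of_deriv_ne_zero (h2 u hu)).hasDerivAt).add_const 2
    rw [← deriv_const_mul mu (differentiableAt_of_deriv_ne_zero (h1 u hu)),
      ← hrel.deriv isOpen_Ioi hu, hl.deriv, mul_one]
  have hlam : lam ≠ 0 := by
    rintro rfl
    have hmu : mu = 0 := by simpa [h1 1 h1pos] using (hdiff 1 h1pos).symm
    simpa [hmu] using hrel h1pos
  refine ⟨hlam, fun u hu => ?_⟩
  have := hdiff u hu
  field_simp
  linarith

theorem eqOn_div_of_euler {f : ℝ → ℝ} {lam k : ℝ}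
    (h1 : ∀ u ∈ Ioi (0 : ℝ), deriv f u ≠ 0)
    (h2 : ∀ u ∈ Ioi (0 : ℝ), deriv (deriv f) u ≠ 0)
    (hA : ∀ u ∈ Ioi (0 : ℝ), Bfun f u - 1 / deriv f u = lam * u) (hlam : lam ≠ 0)
    (heuler : ∀ u ∈ Ioi (0 : ℝ), u * deriv (deriv f) u = k * deriv f u) :
    EqOn (deriv f) (fun u => (1 - k) / (k * lam) / u) (Ioi 0) := by
  intro u hu
  have hu0 : u ≠ 0 := ne_of_gt hu
  have hg := h1 u hu
  have hk : k ≠ 0 := by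
    rintro rfl
    exact mul_ne_zero hu0 (h2 u hu) (by simpa using heuler u hu)
  have hAu := hA u hu
  rw [Bfun_eq_of_mul_deriv_deriv_eq h2 heuler hu] at hAu
  field_simp at hAu ⊢
  linarith

theorem lapII_eigen_classification_general
    (f : ℝ → ℝ)
    (h1 : ∀ u ∈ Set.Ioi (0 : ℝ), deriv f u ≠ 0)
    (h2 : ∀ u ∈ Set.Ioi (0 : ℝ), deriv (deriv f) u ≠ 0)
    (lam mu : ℝ)
    (hA : ∀ u ∈ Set.Ioi (0 : ℝ), Bfun f u - 1 / deriv f u = lam * u)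
    (hB : ∀ u ∈ Set.Ioi (0 : ℝ), Bfun f u * deriv f u + 1 = mu * f u) :
    lam ≠ 0 ∧ mu = 0 ∧
    ∃ c : ℝ, ∀ u ∈ Set.Ioi (0 : ℝ), f u = -(2 / lam) * Real.log u + c := by
  obtain ⟨hlam, heuler⟩ := ne_zero_and_euler_of_eqOn h1 h2 (eqOn_lam_mul_deriv_add_two h1 hA hB)
  set k := mu / lam - 1 with hk
  have hinv := eqOn_div_of_euler h1 h2 hA hlam heuler
  have h1pos : (1 : ℝ) ∈ Ioi 0 := mem_Ioi.2 one_pos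
  have hk1 : k = -1 := by
    have h := (heuler 1 h1pos).symm.trans (mul_deriv_eq_neg_of_eqOn_div hinv 1 h1pos)
    exact mul_right_cancel₀ (h1 1 h1pos) (h.trans (neg_one_mul _).symm)
  have hmu : mu = 0 := by
    have : mu / lam = 0 := by linarith
    exact (div_eq_zero_iff.1 this).resolve_right hlam
  have hC : (1 - k) / (k * lam) = -(2 / lam) := by
    rw [hk1]
    field_simp
    ring
  exact ⟨hlam, hmu, exists_eq_mul_log_add_of_eqOn_deriv
    (fun u hu => differentiableAt_of_deriv_ne_zero (h1 u hu)) (hC ▸ hinv)⟩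

/-- If `f` is three times differentiable on `(0,∞)` with `f' ≠ 0`, `f'' ≠ 0`, and there
are `λ, μ` with `B(u) − 1/f'(u) = λu` and `B(u) f'(u) + 1 = μ f(u)` on `(0,∞)` (i.e. the
coordinate functions of the surface of revolution are `Δ^{II}`-eigenfunctions with
eigenvalues `λ, λ, μ`), then `λ ≠ 0`, `μ = 0`, and `f(u) = −(2/λ) ln u + c`. -/
theorem lapII_eigen_classification
    (f : ℝ → ℝ)
    (hf : ∀ u ∈ Set.Ioi (0 : ℝ), DifferentiableAt ℝ f u)
    (hf' : ∀ u ∈ Set.Ioi (0 : ℝ), DifferentiableAt ℝ (deriv f) u)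
    (hf'' : ∀ u ∈ Set.Ioi (0 : ℝ), DifferentiableAt ℝ (deriv (deriv f)) u)
    (h1 : ∀ u ∈ Set.Ioi (0 : ℝ), deriv f u ≠ 0)
    (h2 : ∀ u ∈ Set.Ioi (0 : ℝ), deriv (deriv f) u ≠ 0)
    (lam mu : ℝ)
    (hA : ∀ u ∈ Set.Ioi (0 : ℝ), Bfun f u - 1 / deriv f u = lam * u)
    (hB : ∀ u ∈ Set.Ioi (0 : ℝ), Bfun f u * deriv f u + 1 = mu * f u) :
    lam ≠ 0 ∧ mu = 0 ∧
    ∃ c : ℝ, ∀ u ∈ Set.Ioi (0 : ℝ), f u = -(2 / lam) * Real.log u + c :=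
  lapII_eigen_classification_general f h1 h2 lam mu hA hB
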